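/- Let (X, μ) be a probability space, p > 0, n ≥ 1, E ≥ 1, c > 0, C > 0, and φ : X → (−∞, −1] measurable with ∫ exp(c·E^{−1/n}·|φ|^{1+p/n}) dμ ≤ C. Then for every positive integer k, log ∫ exp(−k·φ) dμ ≤ A·k^{1+n/p}·E^{1/p} + log C, where A = p·n^{n/p} / (c^{n/p}·(n+p)^{1+n/p}). -/

import Mathlib

/-!
Write `g = c E^{-1/n} |φ|^{1+p/n}`. Young's inequality with the conjugate exponents
`1 + n/p` and `1 + p/n`, with the weight chosen so that the `|φ|`-term is exactly `g`, gives the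
pointwise bound `-kφ ≤ k|φ| ≤ A k^{1+n/p} E^{1/p} + g`. Exponentiating and integrating,
`∫ exp(-kφ) ≤ exp(A k^{1+n/p} E^{1/p}) ∫ exp g ≤ exp(A k^{1+n/p} E^{1/p}) C`.
-/

open MeasureTheory Real

/-- Young's inequality `xy ≤ x^q/q + y^r/r` for `x = a s`, `y = b / s`, where `s^r = (rD)⁻¹`. -/
theorem Real.mul_le_rpow_div_add_mul_rpow {a b q r D : ℝ} (ha : 0 ≤ a) (hb : 0 ≤ b)
    (hqr : q.HolderConjugate r) (hD : 0 < D) :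
    a * b ≤ (r * D) ^ (1 - q) * a ^ q / q + D * b ^ r := by
  have hrD : 0 < r * D := mul_pos hqr.symm.pos hD
  set s := (r * D) ^ (-r⁻¹)
  have hs : 0 < s := rpow_pos_of_pos hrD _
  have hsq : s ^ q = (r * D) ^ (1 - q) := by
    rw [← rpow_mul hrD.le, neg_mul, inv_mul_eq_div, hqr.div_conj_eq_sub_one, neg_sub]
  have hsr : s ^ r = (r * D)⁻¹ := by
    rw [← rpow_mul hrD.le, neg_mul, inv_mul_cancel₀ hqr.symm.ne_zero, rpow_neg_one]
  calc a * b = (a * s) * (b / s) := by field_simp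
    _ ≤ (a * s) ^ q / q + (b / s) ^ r / r :=
      young_inequality_of_nonneg (by positivity) (by positivity) hqr
    _ = (r * D) ^ (1 - q) * a ^ q / q + D * b ^ r := by
      rw [mul_rpow ha hs.le, div_rpow hb hs.le, hsq, hsr]
      field_simp [hqr.symm.ne_zero]

theorem Real.holderConjugate_one_add_div {a b : ℝ} (ha : 0 < a) (hb : 0 < b) :
    (1 + a / b).HolderConjugate (1 + b / a) := by
  rw [holderConjugate_iff]
  refine ⟨by linarith [div_pos ha hb], ?_⟩
  field_simp
  ring

/-- Aubin's constant `A`, for the exponent `p` and the dimension `N`. -/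
noncomputable def aubinConst (p N c : ℝ) : ℝ :=
  p * N ^ (N / p) / (c ^ (N / p) * (N + p) ^ (1 + N / p))

theorem rpow_one_sub_div_eq_aubinConst_mul {p N c E : ℝ} (hp : 0 < p) (hN : 0 < N)
    (hc : 0 < c) (hE : 0 < E) :
    ((1 + p / N) * (c * E ^ (-1 / N))) ^ (1 - (1 + N / p)) / (1 + N / p)
      = aubinConst p N c * E ^ (1 / p) := by
  have hexp : -1 / N * -(N / p) = 1 / p := by field_simp
  rw [sub_add_cancel_left, show 1 + p / N = (N + p) / N by field_simp,
    mul_rpow (by positivity) (by positivity), mul_rpow hc.le (by positivity),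
    div_rpow (by positivity) hN.le, ← rpow_mul hE.le, hexp, rpow_neg (by positivity),
    rpow_neg hN.le, rpow_neg hc.le, aubinConst, rpow_add (by positivity), rpow_one,
    show 1 + N / p = (N + p) / p by field_simp; ring]
  field_simp

theorem mul_le_aubinConst_mul_add {p N c E k t : ℝ} (hp : 0 < p) (hN : 0 < N) (hc : 0 < c)
    (hE : 0 < E) (hk : 0 ≤ k) (ht : 0 ≤ t) :
    k * t ≤ aubinConst p N c * k ^ (1 + N / p) * E ^ (1 / p)
      + c * E ^ (-1 / N) * t ^ (1 + p / N) := by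
  calc k * t
      ≤ ((1 + p / N) * (c * E ^ (-1 / N))) ^ (1 - (1 + N / p)) * k ^ (1 + N / p) / (1 + N / p)
        + c * E ^ (-1 / N) * t ^ (1 + p / N) :=
      mul_le_rpow_div_add_mul_rpow hk ht (holderConjugate_one_add_div hN hp) (by positivity)
    _ = aubinConst p N c * k ^ (1 + N / p) * E ^ (1 / p)
        + c * E ^ (-1 / N) * t ^ (1 + p / N) := by
      rw [mul_div_right_comm, rpow_one_sub_div_eq_aubinConst_mul hp hN hc hE]
      ring

theorem log_integral_exp_le_add_log_integral_exp {X : Type*} [MeasurableSpace X]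
    {μ : Measure X} [NeZero μ] {f g : X → ℝ} {B : ℝ} (hf : AEStronglyMeasurable f μ)
    (hg : Integrable (fun x => exp (g x)) μ) (hfg : ∀ᵐ x ∂μ, f x ≤ B + g x) :
    log (∫ x, exp (f x) ∂μ) ≤ B + log (∫ x, exp (g x) ∂μ) := by
  have hle : ∀ᵐ x ∂μ, exp (f x) ≤ exp B * exp (g x) := by
    filter_upwards [hfg] with x hx
    rw [← exp_add]
    exact exp_le_exp.2 hx
  have hfi : Integrable (fun x => exp (f x)) μ :=
    (hg.const_mul _).mono' (continuous_exp.comp_aestronglyMeasurable hf)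
      (by simpa only [norm_of_nonneg (exp_pos _).le] using hle)
  calc log (∫ x, exp (f x) ∂μ)
      ≤ log (∫ x, exp B * exp (g x) ∂μ) :=
        log_le_log (integral_exp_pos hfi) (integral_mono_ae hfi (hg.const_mul _) hle)
    _ = B + log (∫ x, exp (g x) ∂μ) := by
      rw [integral_const_mul, log_mul (exp_pos _).ne' (integral_exp_pos hg).ne', log_exp]

theorem aubin_from_moser_trudinger_general {X : Type*} [MeasurableSpace X]
    (μ : Measure X) [IsProbabilityMeasure μ]
    (p : ℝ) (hp : 0 < p) (n : ℕ) (hn : 1 ≤ n)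
    (E c C : ℝ) (hE : 1 ≤ E) (hc : 0 < c)
    (φ : X → ℝ) (hmeas : Measurable φ)
    (hint : Integrable (fun x => Real.exp (c * E ^ (-(1:ℝ)/n) * |φ x| ^ (1 + p / n))) μ)
    (hMT : ∫ x, Real.exp (c * E ^ (-(1:ℝ)/n) * |φ x| ^ (1 + p / n)) ∂μ ≤ C) :
    ∀ k : ℕ, 0 < k →
      Real.log (∫ x, Real.exp (-(k:ℝ) * φ x) ∂μ) ≤
        (p * (n:ℝ) ^ ((n:ℝ)/p) / (c ^ ((n:ℝ)/p) * ((n:ℝ) + p) ^ (1 + (n:ℝ)/p)))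
          * (k:ℝ) ^ (1 + (n:ℝ)/p) * E ^ (1/p) + Real.log C := by
  intro k _
  have hN : (0 : ℝ) < n := by exact_mod_cast hn
  have hpointwise (x : X) : -(k : ℝ) * φ x ≤ aubinConst p n c * (k : ℝ) ^ (1 + (n : ℝ) / p)
      * E ^ (1 / p) + c * E ^ (-(1 : ℝ) / n) * |φ x| ^ (1 + p / n) :=
    calc -(k : ℝ) * φ x = k * -φ x := neg_mul_comm _ _
      _ ≤ k * |φ x| := mul_le_mul_of_nonneg_left (neg_le_abs _) k.cast_nonneg
      _ ≤ _ := mul_le_aubinConst_mul_add hp hN hc (by linarith) k.cast_nonneg (abs_nonneg _)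
  calc Real.log (∫ x, Real.exp (-(k : ℝ) * φ x) ∂μ)
      ≤ _ := log_integral_exp_le_add_log_integral_exp
        (hmeas.const_mul _).aestronglyMeasurable hint (ae_of_all _ hpointwise)
    _ ≤ _ := add_le_add_right (log_le_log (integral_exp_pos hint) hMT) _

theorem aubin_from_moser_trudinger {X : Type*} [MeasurableSpace X]
    (μ : Measure X) [IsProbabilityMeasure μ]
    (p : ℝ) (hp : 0 < p) (n : ℕ) (hn : 1 ≤ n)
    (E c C : ℝ) (hE : 1 ≤ E) (hc : 0 < c) (hC : 0 < C)
    (φ : X → ℝ) (hmeas : Measurable φ) (hφ : ∀ x, φ x ≤ -1)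
    (hint : Integrable (fun x => Real.exp (c * E ^ (-(1:ℝ)/n) * |φ x| ^ (1 + p / n))) μ)
    (hMT : ∫ x, Real.exp (c * E ^ (-(1:ℝ)/n) * |φ x| ^ (1 + p / n)) ∂μ ≤ C) :
    ∀ k : ℕ, 0 < k →
      Real.log (∫ x, Real.exp (-(k:ℝ) * φ x) ∂μ) ≤
        (p * (n:ℝ) ^ ((n:ℝ)/p) / (c ^ ((n:ℝ)/p) * ((n:ℝ) + p) ^ (1 + (n:ℝ)/p)))
          * (k:ℝ) ^ (1 + (n:ℝ)/p) * E ^ (1/p) + Real.log C :=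
  aubin_from_moser_trudinger_general μ p hp n hn E c C hE hc φ hmeas hint hMT
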